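/- Let X̃ be a countable set, m̃ : X̃→(0,∞), and let Γ be an infinite group of bijections of X̃ which preserve m̃ (m̃(γ(x̃))=m̃(x̃) for all γ, x̃) and act freely on X̃ (if γ(x̃)=x̃ for some x̃ then γ is the identity). Suppose φ : X̃→ℝ satisfies ∑_{x̃∈X̃} φ(x̃)²·m̃(x̃) < ∞ and for every γ∈Γ there exists α(γ)∈ℝ with φ(γ(x̃)) = α(γ)·φ(x̃) for all x̃∈X̃. Then φ = 0. -/
import Mathlib


/-- If `Γ` is an infinite group of measure-preserving bijections of a countable measured
set `(X̃, m̃)` acting freely, then any `φ ∈ ℓ²(X̃, m̃)` which is projectively `Γ`-invariant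
(for each `γ` there is `α(γ)` with `φ∘γ = α(γ)·φ`) vanishes identically. -/
theorem stmt18 {Xt : Type*} [Countable Xt]
    (mt : Xt → ℝ) (hmt : ∀ x, 0 < mt x)
    (Γ : Subgroup (Equiv.Perm Xt))
    (hinf : (Γ : Set (Equiv.Perm Xt)).Infinite)
    (hpres : ∀ γ ∈ Γ, ∀ x : Xt, mt (γ x) = mt x)
    (hfree : ∀ γ ∈ Γ, (∃ x : Xt, γ x = x) → γ = 1)
    (φ : Xt → ℝ)
    (hl2 : Summable (fun x => φ x ^ 2 * mt x))
    (hproj : ∀ γ ∈ Γ, ∃ α : ℝ, ∀ x : Xt, φ (γ x) = α * φ x) :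
    φ = 0 := by
  by_contra hφ
  obtain ⟨x0, hx0⟩ : ∃ x, φ x ≠ 0 := by
    by_contra h
    push_neg at h
    exact hφ (funext h)
  set g : Xt → ℝ := fun x => φ x ^ 2 * mt x with hg
  have hgx0 : 0 < g x0 := mul_pos (by positivity) (hmt x0)
  have hsum : Summable g := hl2
  -- total sum is positive
  have htot : 0 < ∑' x, g x :=
    Summable.tsum_pos hsum (fun x => mul_nonneg (sq_nonneg _) (hmt x).le) x0 hgx0
  -- for each γ ∈ Γ, g (γ x0) = g x0
  have key : ∀ γ ∈ Γ, g (γ x0) = g x0 := by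
    intro γ hγ
    obtain ⟨α, hα⟩ := hproj γ hγ
    -- by reindexing, ∑ g (γ x) = ∑ g x
    have hre : ∑' x, g (γ x) = ∑' x, g x := (γ : Equiv.Perm Xt).tsum_eq g
    have hsum' : Summable (fun x => g (γ x)) :=
      ((γ : Equiv.Perm Xt).summable_iff (f := g)).2 hsum
    have heq : ∀ x, g (γ x) = α ^ 2 * g x := by
      intro x
      simp only [hg, hα x, hpres γ hγ x]
      ring
    have : α ^ 2 * ∑' x, g x = ∑' x, g x := by
      rw [← tsum_mul_left]
      rw [← hre]
      exact tsum_congr fun x => (heq x).symm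
    have hα2 : α ^ 2 = 1 :=
      mul_right_cancel₀ htot.ne' (this.trans (one_mul _).symm)
    rw [heq x0, hα2, one_mul]
  -- the orbit of x0 is infinite
  have hmap : Set.InjOn (fun γ : Equiv.Perm Xt => γ x0) (Γ : Set (Equiv.Perm Xt)) := by
    intro γ hγ δ hδ h
    simp only at h
    have : (δ⁻¹ * γ) x0 = x0 := by
      simp [Equiv.Perm.mul_apply, h]
    have h1 : δ⁻¹ * γ = 1 := hfree _ (mul_mem (inv_mem hδ) hγ) ⟨x0, this⟩
    exact (inv_mul_eq_one.mp h1).symm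
  have horb : (Set.image (fun γ : Equiv.Perm Xt => γ x0) (Γ : Set (Equiv.Perm Xt))).Infinite :=
    hinf.image hmap
  -- but summability forces g → 0 cofinitely
  have htend := hsum.tendsto_cofinite_zero
  have hev : ∀ᶠ x in Filter.cofinite, g x < g x0 := htend.eventually_lt_const hgx0
  have hfin : {x | ¬ g x < g x0}.Finite := hev
  exact hfin.not_infinite (horb.mono (by
    rintro _ ⟨γ, hγ, rfl⟩
    simp [key γ hγ]))
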